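/- arXiv:nlin/0608018 — 3 statements merged into one kernel-verified Lean document; each statement's English description precedes it below -/
import Mathlib

section
/- Assume Poisson tensors π_n (as bundle maps) satisfy the Lenard relations π_n dH_j = π_{n−1} dH_{j+1} for all j, and H₁ is a Casimir of π₁. Then all Hamiltonians are in involution with respect to π₁: {H_i, H_j}₁ = 0 for all i, j. -/
/-- Assume the Poisson tensors `π_n : T*M → TM` (skew bundle maps)
satisfy the Lenard relations `π_{n+1} dH_j = π_n dH_{j+1}` and `H₁` is a Casimir of
`π₁` (`π₁ dH₁ = 0`).  Then all Hamiltonians are in involution with respect to `π₁`: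
`{H_i, H_j}₁ = ⟨dH_i, π₁ dH_j⟩ = 0`. -/
theorem involution_from_lenard_relations
    {C V : Type*} [AddCommGroup C] [Module ℝ C] [AddCommGroup V] [Module ℝ V]
    (π : ℕ → C →ₗ[ℝ] V) (pair : C →ₗ[ℝ] V →ₗ[ℝ] ℝ) (dH : ℕ → C)
    (hskew : ∀ (n : ℕ) (α β : C), pair α (π n β) = -pair β (π n α))
    (hlen : ∀ n j : ℕ, 1 ≤ n → 1 ≤ j → π (n + 1) (dH j) = π n (dH (j + 1)))
    (hcas : π 1 (dH 1) = 0) :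
    ∀ i j : ℕ, 1 ≤ i → 1 ≤ j → pair (dH i) (π 1 (dH j)) = 0 := by
  have step : ∀ i j : ℕ, 1 ≤ i → 1 ≤ j →
      pair (dH i) (π 1 (dH (j + 1))) = pair (dH (i + 1)) (π 1 (dH j)) := by
    intro i j hi hj
    have h1 : π 1 (dH (j + 1)) = π 2 (dH j) := (hlen 1 j le_rfl hj).symm
    have h2 : π 2 (dH i) = π 1 (dH (i + 1)) := hlen 1 i le_rfl hi
    rw [h1, hskew 2, h2, hskew 1, neg_neg]
  intro i j hi hj
  induction j generalizing i with
  | zero => exact absurd hj (by norm_num)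
  | succ j ih =>
    rcases Nat.eq_or_lt_of_le hj with h | h
    · rw [← h, hcas]; simp
    · have hj1 : 1 ≤ j := Nat.lt_succ_iff.mp h
      rw [step i j hi hj1]
      exact ih (i + 1) (le_trans hi (Nat.le_succ i)) hj1
end

section
/- The quadratic Toda bracket π₂ on ℝ^{2N−1}, defined by {a_i,a_{i+1}}=(1/2)a_i a_{i+1}, {a_i,b_i}=−a_i b_i, {a_i,b_{i+1}}=a_i b_{i+1}, {b_i,b_{i+1}}=2a_i² (all other coordinate brackets zero), satisfies the Jacobi identity and hence is a Poisson bracket. -/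
/-- Phase space of the Toda lattice in Flaschka coordinates:
`ℝ^{2N-1}` with coordinates `a₀,…,a_{N-2}` (indexed by `Fin (N-1)`, 0-based) and
`b₀,…,b_{N-1}` (indexed by `Fin N`). -/
abbrev TodaPt (N : ℕ) := (Fin (N - 1) ⊕ Fin N) → ℝ

/-- The quadratic Toda bracket `π₂`: `{a_i, a_{i+1}} = (1/2)a_i a_{i+1}`,
`{a_i, b_i} = -a_i b_i`, `{a_i, b_{i+1}} = a_i b_{i+1}`, `{b_i, b_{i+1}} = 2a_i²`,
all other coordinate brackets zero. -/
noncomputable def todaPi2 (N : ℕ) (x : TodaPt N) :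
    (Fin (N - 1) ⊕ Fin N) → (Fin (N - 1) ⊕ Fin N) → ℝ
  | .inl i, .inl i' =>
      if (i' : ℕ) = (i : ℕ) + 1 then (1 / 2) * x (.inl i) * x (.inl i')
      else if (i : ℕ) = (i' : ℕ) + 1 then -((1 / 2) * x (.inl i') * x (.inl i))
      else 0
  | .inl i, .inr j =>
      if (j : ℕ) = (i : ℕ) then -(x (.inl i) * x (.inr j))
      else if (j : ℕ) = (i : ℕ) + 1 then x (.inl i) * x (.inr j) else 0
  | .inr j, .inl i =>
      -(if (j : ℕ) = (i : ℕ) then -(x (.inl i) * x (.inr j))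
        else if (j : ℕ) = (i : ℕ) + 1 then x (.inl i) * x (.inr j) else 0)
  | .inr j, .inr j' =>
      if h : (j' : ℕ) = (j : ℕ) + 1 ∧ (j : ℕ) < N - 1 then
        2 * (x (.inl ⟨(j : ℕ), h.2⟩)) ^ 2
      else if h' : (j : ℕ) = (j' : ℕ) + 1 ∧ (j' : ℕ) < N - 1 then
        -(2 * (x (.inl ⟨(j' : ℕ), h'.2⟩)) ^ 2)
      else 0

/-! auxiliary: ℕ-indexed coordinates -/

noncomputable def aOf (N : ℕ) (x : TodaPt N) (n : ℕ) : ℝ :=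
  if h : n < N - 1 then x (.inl ⟨n, h⟩) else 0

noncomputable def bOf (N : ℕ) (x : TodaPt N) (n : ℕ) : ℝ :=
  if h : n < N then x (.inr ⟨n, h⟩) else 0

def emb (N : ℕ) : (Fin (N - 1) ⊕ Fin N) → ℕ ⊕ ℕ
  | .inl i => .inl (i : ℕ)
  | .inr j => .inr (j : ℕ)

lemma aOf_coe (N : ℕ) (x : TodaPt N) (i : Fin (N - 1)) :
    aOf N x (i : ℕ) = x (.inl i) := by simp [aOf, i.isLt]

lemma bOf_coe (N : ℕ) (x : TodaPt N) (j : Fin N) :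
    bOf N x (j : ℕ) = x (.inr j) := by simp [bOf, j.isLt]

/-! ℕ-indexed bracket and Leibniz-expanded derivative pairing -/

noncomputable def P2 (N : ℕ) (a b : ℕ → ℝ) : ℕ ⊕ ℕ → ℕ ⊕ ℕ → ℝ
  | .inl i, .inl i' =>
      if i' = i + 1 then (1/2) * a i * a i'
      else if i = i' + 1 then -((1/2) * a i' * a i) else 0
  | .inl i, .inr j =>
      if j = i then -(a i * b j)
      else if j = i + 1 then a i * b j else 0
  | .inr j, .inl i =>
      -(if j = i then -(a i * b j)
        else if j = i + 1 then a i * b j else 0)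
  | .inr j, .inr j' =>
      if j' = j + 1 ∧ j < N - 1 then 2 * (a j) ^ 2
      else if j = j' + 1 ∧ j' < N - 1 then -(2 * (a j') ^ 2) else 0

noncomputable def JT (N : ℕ) (a b : ℕ → ℝ) (P : ℕ ⊕ ℕ → ℝ) : ℕ ⊕ ℕ → ℕ ⊕ ℕ → ℝ
  | .inl m, .inl m' =>
      if m' = m + 1 then (1/2) * (P (.inl m) * a m' + a m * P (.inl m'))
      else if m = m' + 1 then -((1/2) * (P (.inl m') * a m + a m' * P (.inl m))) else 0
  | .inl m, .inr n =>
      if n = m then -(P (.inl m) * b n + a m * P (.inr n))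
      else if n = m + 1 then P (.inl m) * b n + a m * P (.inr n) else 0
  | .inr n, .inl m =>
      -(if n = m then -(P (.inl m) * b n + a m * P (.inr n))
        else if n = m + 1 then P (.inl m) * b n + a m * P (.inr n) else 0)
  | .inr n, .inr n' =>
      if n' = n + 1 ∧ n < N - 1 then 2 * (2 * a n * P (.inl n))
      else if n = n' + 1 ∧ n' < N - 1 then -(2 * (2 * a n' * P (.inl n'))) else 0

lemma pi_eq (N : ℕ) (x : TodaPt N) (p q : Fin (N - 1) ⊕ Fin N) :
    todaPi2 N x p q = P2 N (aOf N x) (bOf N x) (emb N p) (emb N q) := by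
  cases p <;> cases q <;> simp only [todaPi2, P2, emb] <;>
    split_ifs <;>
      first
        | rfl
        | (simp [aOf_coe, bOf_coe]; done)
        | (simp [aOf, bOf, *]; done)
        | simp_all [aOf, bOf]

lemma sum_delta (N : ℕ) (g : (Fin (N-1) ⊕ Fin N) → ℝ) (p : Fin (N-1) ⊕ Fin N) :
    ∑ l : Fin (N-1) ⊕ Fin N, g l * (Pi.single l (1:ℝ) : TodaPt N) p = g p := by
  simp [Pi.single_apply, mul_ite, mul_one, mul_zero]

lemma sum_two (N : ℕ) (x : TodaPt N) (g : (Fin (N-1) ⊕ Fin N) → ℝ) (c : ℝ)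
    (p q : Fin (N-1) ⊕ Fin N) :
    ∑ l : Fin (N-1) ⊕ Fin N,
        g l * (c * ((Pi.single l (1:ℝ) : TodaPt N) p * x q +
          x p * (Pi.single l (1:ℝ) : TodaPt N) q))
      = c * (g p * x q + x p * g q) := by
  have h : ∀ l ∈ Finset.univ, g l * (c * ((Pi.single l (1:ℝ) : TodaPt N) p * x q +
          x p * (Pi.single l (1:ℝ) : TodaPt N) q))
      = (c * x q) * (g l * (Pi.single l (1:ℝ) : TodaPt N) p) +
        (c * x p) * (g l * (Pi.single l (1:ℝ) : TodaPt N) q) := fun l _ => by ring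
  rw [Finset.sum_congr rfl h, Finset.sum_add_distrib, ← Finset.mul_sum, ← Finset.mul_sum,
    sum_delta, sum_delta]
  ring

lemma sum_two' (N : ℕ) (x : TodaPt N) (g : (Fin (N-1) ⊕ Fin N) → ℝ)
    (p q : Fin (N-1) ⊕ Fin N) :
    ∑ l : Fin (N-1) ⊕ Fin N,
        g l * ((Pi.single l (1:ℝ) : TodaPt N) p * x q +
          x p * (Pi.single l (1:ℝ) : TodaPt N) q)
      = g p * x q + x p * g q := by
  have h := sum_two N x g 1 p q
  simpa using h

lemma sum_sq (N : ℕ) (x : TodaPt N) (g : (Fin (N-1) ⊕ Fin N) → ℝ)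
    (p : Fin (N-1) ⊕ Fin N) :
    ∑ l : Fin (N-1) ⊕ Fin N,
        g l * (2 * (2 * x p * (Pi.single l (1:ℝ) : TodaPt N) p))
      = 2 * (2 * x p * g p) := by
  have h : ∀ l ∈ Finset.univ, g l * (2 * (2 * x p * (Pi.single l (1:ℝ) : TodaPt N) p))
      = (2 * (2 * x p)) * (g l * (Pi.single l (1:ℝ) : TodaPt N) p) := fun l _ => by ring
  rw [Finset.sum_congr rfl h, ← Finset.mul_sum, sum_delta]
  ring

lemma fd_mul (N : ℕ) (c : ℝ) (p q : Fin (N-1) ⊕ Fin N) (x v : TodaPt N) :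
    fderiv ℝ (fun y : TodaPt N => c * y p * y q) x v = c * (v p * x q + x p * v q) := by
  have hp := hasFDerivAt_apply (𝕜 := ℝ) p x
  have hq := hasFDerivAt_apply (𝕜 := ℝ) q x
  have hd : HasFDerivAt (fun y : TodaPt N => c * y p * y q) _ x := (hp.const_mul c).mul hq
  rw [hd.fderiv]
  simp; ring

lemma fd_mul' (N : ℕ) (p q : Fin (N-1) ⊕ Fin N) (x v : TodaPt N) :
    fderiv ℝ (fun y : TodaPt N => y p * y q) x v = v p * x q + x p * v q := by
  have h : (fun y : TodaPt N => y p * y q) = fun y : TodaPt N => (1:ℝ) * y p * y q := by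
    funext y; ring
  rw [h, fd_mul]; ring

lemma fd_mul_neg (N : ℕ) (p q : Fin (N-1) ⊕ Fin N) (x v : TodaPt N) :
    fderiv ℝ (fun y : TodaPt N => -(y p * y q)) x v = -(v p * x q + x p * v q) := by
  have h : (fun y : TodaPt N => -(y p * y q)) = fun y : TodaPt N => (-1:ℝ) * y p * y q := by
    funext y; ring
  rw [h, fd_mul]; ring

lemma fd_mulc_neg (N : ℕ) (c : ℝ) (p q : Fin (N-1) ⊕ Fin N) (x v : TodaPt N) :
    fderiv ℝ (fun y : TodaPt N => -(c * y p * y q)) x v = -(c * (v p * x q + x p * v q)) := by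
  have h : (fun y : TodaPt N => -(c * y p * y q)) = fun y : TodaPt N => (-c) * y p * y q := by
    funext y; ring
  rw [h, fd_mul]; ring

lemma fd_sq (N : ℕ) (c : ℝ) (p : Fin (N-1) ⊕ Fin N) (x v : TodaPt N) :
    fderiv ℝ (fun y : TodaPt N => c * (y p) ^ 2) x v = c * (2 * x p * v p) := by
  have h : (fun y : TodaPt N => c * (y p) ^ 2) = fun y : TodaPt N => c * y p * y p := by
    funext y; ring
  rw [h, fd_mul]; ring

lemma fd_sq_neg (N : ℕ) (c : ℝ) (p : Fin (N-1) ⊕ Fin N) (x v : TodaPt N) :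
    fderiv ℝ (fun y : TodaPt N => -(c * (y p) ^ 2)) x v = -(c * (2 * x p * v p)) := by
  have h : (fun y : TodaPt N => -(c * (y p) ^ 2)) = fun y : TodaPt N => (-c) * y p * y p := by
    funext y; ring
  rw [h, fd_mul]; ring

noncomputable def dPi (N : ℕ) (x v : TodaPt N) :
    (Fin (N - 1) ⊕ Fin N) → (Fin (N - 1) ⊕ Fin N) → ℝ
  | .inl i, .inl i' =>
      if (i' : ℕ) = (i : ℕ) + 1 then
        (1 / 2) * (v (.inl i) * x (.inl i') + x (.inl i) * v (.inl i'))
      else if (i : ℕ) = (i' : ℕ) + 1 then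
        -((1 / 2) * (v (.inl i') * x (.inl i) + x (.inl i') * v (.inl i)))
      else 0
  | .inl i, .inr j =>
      if (j : ℕ) = (i : ℕ) then -(v (.inl i) * x (.inr j) + x (.inl i) * v (.inr j))
      else if (j : ℕ) = (i : ℕ) + 1 then
        v (.inl i) * x (.inr j) + x (.inl i) * v (.inr j)
      else 0
  | .inr j, .inl i =>
      -(if (j : ℕ) = (i : ℕ) then -(v (.inl i) * x (.inr j) + x (.inl i) * v (.inr j))
        else if (j : ℕ) = (i : ℕ) + 1 then
          v (.inl i) * x (.inr j) + x (.inl i) * v (.inr j)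
        else 0)
  | .inr j, .inr j' =>
      if h : (j' : ℕ) = (j : ℕ) + 1 ∧ (j : ℕ) < N - 1 then
        2 * (2 * x (.inl ⟨(j : ℕ), h.2⟩) * v (.inl ⟨(j : ℕ), h.2⟩))
      else if h' : (j : ℕ) = (j' : ℕ) + 1 ∧ (j' : ℕ) < N - 1 then
        -(2 * (2 * x (.inl ⟨(j' : ℕ), h'.2⟩) * v (.inl ⟨(j' : ℕ), h'.2⟩)))
      else 0

lemma fderiv_todaPi2 (N : ℕ) (x v : TodaPt N) (j k : Fin (N - 1) ⊕ Fin N) :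
    fderiv ℝ (fun y => todaPi2 N y j k) x v = dPi N x v j k := by
  cases j with
  | inl i =>
    cases k with
    | inl i' =>
      by_cases h1 : (i' : ℕ) = (i : ℕ) + 1
      · simp only [todaPi2, dPi, if_pos h1, fd_mul]
      · by_cases h2 : (i : ℕ) = (i' : ℕ) + 1
        · simp only [todaPi2, dPi, if_neg h1, if_pos h2, fd_mulc_neg]
        · simp only [todaPi2, dPi, if_neg h1, if_neg h2, fderiv_const]; simp
    | inr j' =>
      by_cases h1 : (j' : ℕ) = (i : ℕ)
      · simp only [todaPi2, dPi, if_pos h1, fd_mul_neg]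
      · by_cases h2 : (j' : ℕ) = (i : ℕ) + 1
        · simp only [todaPi2, dPi, if_neg h1, if_pos h2, fd_mul']
        · simp only [todaPi2, dPi, if_neg h1, if_neg h2, fderiv_const]; simp
  | inr j' =>
    cases k with
    | inl i =>
      by_cases h1 : (j' : ℕ) = (i : ℕ)
      · simp only [todaPi2, dPi, if_pos h1, neg_neg, fd_mul']
      · by_cases h2 : (j' : ℕ) = (i : ℕ) + 1
        · simp only [todaPi2, dPi, if_neg h1, if_pos h2, fd_mul_neg]
        · simp only [todaPi2, dPi, if_neg h1, if_neg h2, neg_zero, fderiv_const]; simp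
    | inr j'' =>
      by_cases h1 : (j'' : ℕ) = (j' : ℕ) + 1 ∧ (j' : ℕ) < N - 1
      · simp only [todaPi2, dPi, dif_pos h1, fd_sq]
      · by_cases h2 : (j' : ℕ) = (j'' : ℕ) + 1 ∧ (j'' : ℕ) < N - 1
        · simp only [todaPi2, dPi, dif_neg h1, dif_pos h2, fd_sq_neg]
        · simp only [todaPi2, dPi, dif_neg h1, dif_neg h2, fderiv_const]; simp

lemma sum_eq (N : ℕ) (x : TodaPt N) (i0 j k : Fin (N - 1) ⊕ Fin N) :
    ∑ l : Fin (N-1) ⊕ Fin N, todaPi2 N x l i0 * dPi N x (Pi.single l 1) j k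
      = JT N (aOf N x) (bOf N x)
          (fun p => P2 N (aOf N x) (bOf N x) p (emb N i0)) (emb N j) (emb N k) := by
  cases j with
  | inl i =>
    cases k with
    | inl i' =>
      by_cases h1 : (i' : ℕ) = (i : ℕ) + 1
      · simp only [dPi, emb, JT, if_pos h1]
        rw [sum_two]
        simp [pi_eq, aOf_coe, emb]
      · by_cases h2 : (i : ℕ) = (i' : ℕ) + 1
        · simp only [dPi, emb, JT, if_neg h1, if_pos h2, mul_neg]
          rw [Finset.sum_neg_distrib, sum_two]
          simp [pi_eq, aOf_coe, emb]
        · simp only [dPi, emb, JT, if_neg h1, if_neg h2, mul_zero]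
          simp
    | inr j' =>
      by_cases h1 : (j' : ℕ) = (i : ℕ)
      · simp only [dPi, emb, JT, if_pos h1, mul_neg]
        rw [Finset.sum_neg_distrib, sum_two']
        simp [pi_eq, aOf_coe, bOf_coe, emb]
      · by_cases h2 : (j' : ℕ) = (i : ℕ) + 1
        · simp only [dPi, emb, JT, if_neg h1, if_pos h2]
          rw [sum_two']
          simp [pi_eq, aOf_coe, bOf_coe, emb]
        · simp only [dPi, emb, JT, if_neg h1, if_neg h2, mul_zero]
          simp
  | inr j' =>
    cases k with
    | inl i =>
      by_cases h1 : (j' : ℕ) = (i : ℕ)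
      · simp only [dPi, emb, JT, if_pos h1, neg_neg]
        rw [sum_two']
        simp [pi_eq, aOf_coe, bOf_coe, emb]
      · by_cases h2 : (j' : ℕ) = (i : ℕ) + 1
        · simp only [dPi, emb, JT, if_neg h1, if_pos h2, mul_neg]
          rw [Finset.sum_neg_distrib, sum_two']
          simp [pi_eq, aOf_coe, bOf_coe, emb]
        · simp only [dPi, emb, JT, if_neg h1, if_neg h2, neg_zero, mul_zero]
          simp
    | inr j'' =>
      by_cases h1 : (j'' : ℕ) = (j' : ℕ) + 1 ∧ (j' : ℕ) < N - 1
      · simp only [dPi, emb, JT, dif_pos h1, if_pos h1]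
        rw [sum_sq]
        simp [pi_eq, emb, aOf, h1.2]
      · by_cases h2 : (j' : ℕ) = (j'' : ℕ) + 1 ∧ (j'' : ℕ) < N - 1
        · simp only [dPi, emb, JT, dif_neg h1, if_neg h1, dif_pos h2, if_pos h2, mul_neg]
          rw [Finset.sum_neg_distrib, sum_sq]
          simp [pi_eq, emb, aOf, h2.2]
        · simp only [dPi, emb, JT, dif_neg h1, if_neg h1, dif_neg h2, if_neg h2, mul_zero]
          simp

set_option maxHeartbeats 4000000 in
lemma jacobi_ab (N : ℕ) (a b : ℕ → ℝ) (I J K : ℕ ⊕ ℕ) :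
    JT N a b (fun p => P2 N a b p I) J K +
    JT N a b (fun p => P2 N a b p J) K I +
    JT N a b (fun p => P2 N a b p K) I J = 0 := by
  rcases I with I | I <;> rcases J with J | J <;> rcases K with K | K <;>
    simp only [JT, P2] <;>
    split_ifs <;>
      first
        | omega
        | (subst_vars; ring)
        | ring

/-- The quadratic Toda bracket `π₂` on `ℝ^{2N-1}` satisfies the Jacobi
identity, expressed in coordinates: for all indices `i, j, k`,
`Σ_l (π_{li} ∂_l π_{jk} + π_{lj} ∂_l π_{ki} + π_{lk} ∂_l π_{ij}) = 0`,
hence it is a Poisson bracket. -/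
theorem toda_quadratic_bracket_jacobi (N : ℕ) (x : TodaPt N)
    (i j k : Fin (N - 1) ⊕ Fin N) :
    ∑ l : Fin (N - 1) ⊕ Fin N,
      (todaPi2 N x l i * fderiv ℝ (fun y => todaPi2 N y j k) x (Pi.single l 1) +
        todaPi2 N x l j * fderiv ℝ (fun y => todaPi2 N y k i) x (Pi.single l 1) +
        todaPi2 N x l k * fderiv ℝ (fun y => todaPi2 N y i j) x (Pi.single l 1)) = 0 := by
  simp only [fderiv_todaPi2]
  rw [Finset.sum_add_distrib, Finset.sum_add_distrib, sum_eq, sum_eq, sum_eq]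
  exact jacobi_ab N (aOf N x) (bOf N x) (emb N i) (emb N j) (emb N k)
end

section
/- For the two-degree-of-freedom Toda lattice with H = (p₁²+p₂²)/2 + e^{q₁−q₂}, the three functions I₁ = p₁+p₂, I₂ = (p₁−p₂)² + 4e^{q₁−q₂}, and I₃ = ((p₁−p₂+√I₂)/(p₁−p₂−√I₂))·exp(√I₂ (q₁+q₂)/(p₁+p₂)) are constants of motion, and H = (I₁² + I₂)/4. -/
/-!
With `u = p₁ - p₂`, `E = e^{q₁-q₂}`, the flow gives `u' = -2E` and `E' = uE`, so
`I₁' = 0` and `I₂' = 2u(-2E) + 4uE = 0`. Hence `I₁ = P` and `√I₂ = s` are constant along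
the flow, and `u' = (u² - s²)/2` is a Riccati equation, whose Möbius transform
`(u + s)/(u - s)` has logarithmic derivative `-s`. Since `(q₁ + q₂)' = P`, the factor
`exp (s (q₁ + q₂) / P)` has logarithmic derivative `s`, so the product `I₃` is conserved.
-/

open Real

structure IsTodaSolution (q₁ q₂ p₁ p₂ : ℝ → ℝ) : Prop where
  hasDerivAt_q₁ : ∀ t, HasDerivAt q₁ (p₁ t) t
  hasDerivAt_q₂ : ∀ t, HasDerivAt q₂ (p₂ t) t
  hasDerivAt_p₁ : ∀ t, HasDerivAt p₁ (-exp (q₁ t - q₂ t)) t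
  hasDerivAt_p₂ : ∀ t, HasDerivAt p₂ (exp (q₁ t - q₂ t)) t

theorem exists_eq_const_of_hasDerivAt_zero {f : ℝ → ℝ} (hf : ∀ t, HasDerivAt f 0 t) :
    ∃ c, ∀ t, f t = c :=
  ⟨f 0, fun t =>
    is_const_of_deriv_eq_zero (fun t => (hf t).differentiableAt) (fun t => (hf t).deriv) t 0⟩

theorem hasDerivAt_div_of_riccati {u : ℝ → ℝ} {s t : ℝ}
    (hu : HasDerivAt u ((u t ^ 2 - s ^ 2) / 2) t) (hs : u t ≠ s) :
    HasDerivAt (fun t => (u t + s) / (u t - s)) (-s * ((u t + s) / (u t - s))) t := by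
  have hs' : u t - s ≠ 0 := sub_ne_zero.mpr hs
  refine ((hu.add_const s).div (hu.sub_const s) hs').congr_deriv ?_
  field_simp
  ring

namespace IsTodaSolution

variable {q₁ q₂ p₁ p₂ : ℝ → ℝ} (h : IsTodaSolution q₁ q₂ p₁ p₂)
include h

theorem hasDerivAt_momentum_add (t : ℝ) : HasDerivAt (fun t => p₁ t + p₂ t) 0 t :=
  ((h.hasDerivAt_p₁ t).add (h.hasDerivAt_p₂ t)).congr_deriv (by ring)

theorem hasDerivAt_momentum_sub (t : ℝ) :
    HasDerivAt (fun t => p₁ t - p₂ t) (-2 * exp (q₁ t - q₂ t)) t :=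
  ((h.hasDerivAt_p₁ t).sub (h.hasDerivAt_p₂ t)).congr_deriv (by ring)

theorem hasDerivAt_exp_position_sub (t : ℝ) :
    HasDerivAt (fun t => exp (q₁ t - q₂ t)) (exp (q₁ t - q₂ t) * (p₁ t - p₂ t)) t :=
  ((h.hasDerivAt_q₁ t).sub (h.hasDerivAt_q₂ t)).exp

theorem hasDerivAt_I₂ (t : ℝ) :
    HasDerivAt (fun t => (p₁ t - p₂ t) ^ 2 + 4 * exp (q₁ t - q₂ t)) 0 t :=
  (((h.hasDerivAt_momentum_sub t).pow 2).add
    ((h.hasDerivAt_exp_position_sub t).const_mul 4)).congr_deriv (by ring)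

theorem hasDerivAt_I₃ (hP : ∀ t, p₁ t + p₂ t ≠ 0)
    (hs : ∀ t, p₁ t - p₂ t ≠ √((p₁ t - p₂ t) ^ 2 + 4 * exp (q₁ t - q₂ t))) (t : ℝ) :
    HasDerivAt (fun t =>
      ((p₁ t - p₂ t + √((p₁ t - p₂ t) ^ 2 + 4 * exp (q₁ t - q₂ t))) /
        (p₁ t - p₂ t - √((p₁ t - p₂ t) ^ 2 + 4 * exp (q₁ t - q₂ t)))) *
      exp (√((p₁ t - p₂ t) ^ 2 + 4 * exp (q₁ t - q₂ t)) *
        (q₁ t + q₂ t) / (p₁ t + p₂ t))) 0 t := by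
  obtain ⟨P, hP_eq⟩ := exists_eq_const_of_hasDerivAt_zero h.hasDerivAt_momentum_add
  obtain ⟨c, hc⟩ := exists_eq_const_of_hasDerivAt_zero h.hasDerivAt_I₂
  simp only [hP_eq, hc] at hP hs ⊢
  have hc_nonneg : 0 ≤ c := hc t ▸ by positivity
  have hriccati : HasDerivAt (fun t => p₁ t - p₂ t)
      (((p₁ t - p₂ t) ^ 2 - √c ^ 2) / 2) t := by
    refine (h.hasDerivAt_momentum_sub t).congr_deriv ?_
    rw [sq_sqrt hc_nonneg, ← hc t]
    ring
  have hratio := hasDerivAt_div_of_riccati hriccati (hs t)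
  have hexp : HasDerivAt (fun t => exp (√c * (q₁ t + q₂ t) / P))
      (√c * exp (√c * (q₁ t + q₂ t) / P)) t := by
    have hQ : HasDerivAt (fun t => q₁ t + q₂ t) P t :=
      hP_eq t ▸ (h.hasDerivAt_q₁ t).add (h.hasDerivAt_q₂ t)
    refine (((hQ.const_mul √c).div_const P).exp).congr_deriv ?_
    field_simp [hP t]
  exact (hratio.mul hexp).congr_deriv (by ring)

end IsTodaSolution

/-- For the two-particle Toda lattice
`H = (p₁² + p₂²)/2 + e^{q₁-q₂}`, the functions `I₁ = p₁ + p₂`,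
`I₂ = (p₁-p₂)² + 4e^{q₁-q₂}`, and
`I₃ = ((p₁-p₂+√I₂)/(p₁-p₂-√I₂)) · exp(√I₂ (q₁+q₂)/(p₁+p₂))` are constants of motion
along Hamilton's flow (`I₃` on the region where `p₁+p₂ ≠ 0`, `I₂ > 0`,
`p₁-p₂ ≠ √I₂`), and `H = (I₁² + I₂)/4`. -/
theorem toda_two_particles_superintegrable
    (q₁ q₂ p₁ p₂ : ℝ → ℝ)
    (hq₁ : ∀ t, HasDerivAt q₁ (p₁ t) t)
    (hq₂ : ∀ t, HasDerivAt q₂ (p₂ t) t)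
    (hp₁ : ∀ t, HasDerivAt p₁ (-Real.exp (q₁ t - q₂ t)) t)
    (hp₂ : ∀ t, HasDerivAt p₂ (Real.exp (q₁ t - q₂ t)) t) :
    (∀ t, HasDerivAt (fun t => p₁ t + p₂ t) 0 t) ∧
    (∀ t, HasDerivAt
      (fun t => (p₁ t - p₂ t) ^ 2 + 4 * Real.exp (q₁ t - q₂ t)) 0 t) ∧
    ((∀ t, p₁ t + p₂ t ≠ 0) →
      (∀ t, 0 < (p₁ t - p₂ t) ^ 2 + 4 * Real.exp (q₁ t - q₂ t)) →
      (∀ t, p₁ t - p₂ t ≠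
        Real.sqrt ((p₁ t - p₂ t) ^ 2 + 4 * Real.exp (q₁ t - q₂ t))) →
      ∀ t, HasDerivAt (fun t =>
        ((p₁ t - p₂ t + Real.sqrt ((p₁ t - p₂ t) ^ 2 + 4 * Real.exp (q₁ t - q₂ t))) /
          (p₁ t - p₂ t - Real.sqrt ((p₁ t - p₂ t) ^ 2 + 4 * Real.exp (q₁ t - q₂ t)))) *
        Real.exp (Real.sqrt ((p₁ t - p₂ t) ^ 2 + 4 * Real.exp (q₁ t - q₂ t)) *
          (q₁ t + q₂ t) / (p₁ t + p₂ t))) 0 t) ∧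
    (∀ t, (p₁ t ^ 2 + p₂ t ^ 2) / 2 + Real.exp (q₁ t - q₂ t) =
      ((p₁ t + p₂ t) ^ 2 + ((p₁ t - p₂ t) ^ 2 + 4 * Real.exp (q₁ t - q₂ t))) / 4) := by
  have h : IsTodaSolution q₁ q₂ p₁ p₂ := ⟨hq₁, hq₂, hp₁, hp₂⟩
  exact ⟨h.hasDerivAt_momentum_add, h.hasDerivAt_I₂,
    fun hP _ hs => h.hasDerivAt_I₃ hP hs, fun t => by ring⟩
end
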